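/- Let ŝ > 0 and α > 0, and suppose a family ξ(γ) ∈ ℝ (indexed by γ ∈ (0,1)) satisfies γ² exp(2α ξ(γ)) - γ² exp(-2α ξ(γ)) → ŝ as γ → 0. Then ξ(γ)/log(1/γ) → 1/α as γ → 0. -/
import Mathlib


open Filter

/-- If γ²e^{2αξ(γ)} - γ²e^{-2αξ(γ)} → shat > 0 as γ → 0⁺ within (0,1), then
ξ(γ)/log(1/γ) → 1/α. -/
theorem stmt13 (α shat : ℝ) (hα : 0 < α) (hshat : 0 < shat) (ξ : ℝ → ℝ)
    (hlim : Tendsto (fun γ => γ ^ 2 * Real.exp (2 * α * ξ γ)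
        - γ ^ 2 * Real.exp (-(2 * α * ξ γ)))
      (nhdsWithin 0 (Set.Ioo (0:ℝ) 1)) (nhds shat)) :
    Tendsto (fun γ => ξ γ / Real.log (1 / γ))
      (nhdsWithin 0 (Set.Ioo (0:ℝ) 1)) (nhds (1 / α)) := by
  set l := nhdsWithin (0:ℝ) (Set.Ioo (0:ℝ) 1) with hl
  set u : ℝ → ℝ := fun γ => γ ^ 2 * Real.exp (2 * α * ξ γ) with hu
  set d : ℝ → ℝ := fun γ => u γ - γ ^ 2 * Real.exp (-(2 * α * ξ γ)) with hd
  have hmem : ∀ᶠ γ in l, γ ∈ Set.Ioo (0:ℝ) 1 := self_mem_nhdsWithin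
  -- limit of γ^4
  have hp : Tendsto (fun γ : ℝ => γ ^ 4) l (nhds 0) := by
    have : Tendsto (fun γ : ℝ => γ ^ 4) (nhds 0) (nhds 0) := by
      simpa using (continuous_pow 4).tendsto (0:ℝ)
    exact this.mono_left nhdsWithin_le_nhds
  -- u = (d + sqrt(d^2 + 4 γ^4))/2 on Ioo 0 1
  have hueq : ∀ᶠ γ in l, u γ = (d γ + Real.sqrt (d γ ^ 2 + 4 * γ ^ 4)) / 2 := by
    filter_upwards [hmem] with γ hγ
    set a := γ ^ 2 * Real.exp (2 * α * ξ γ)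
    set b := γ ^ 2 * Real.exp (-(2 * α * ξ γ))
    have ha : 0 ≤ a := by positivity
    have hb : 0 ≤ b := by positivity
    have hab : a * b = γ ^ 4 := by
      simp only [a, b]
      rw [mul_mul_mul_comm, ← Real.exp_add]
      have h0 : 2 * α * ξ γ + -(2 * α * ξ γ) = 0 := by ring
      rw [h0, Real.exp_zero, mul_one]; ring
    have hsq : d γ ^ 2 + 4 * γ ^ 4 = (a + b) ^ 2 := by
      have : d γ = a - b := rfl
      rw [this, ← hab]; ring
    have : Real.sqrt (d γ ^ 2 + 4 * γ ^ 4) = a + b := by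
      rw [hsq]; exact Real.sqrt_sq (by linarith)
    show a = _
    rw [this]
    show a = (a - b + (a + b)) / 2
    ring
  -- hence u → shat
  have hud : Tendsto d l (nhds shat) := hlim
  have huten : Tendsto u l (nhds shat) := by
    have h1 : Tendsto (fun γ => (d γ + Real.sqrt (d γ ^ 2 + 4 * γ ^ 4)) / 2) l
        (nhds ((shat + Real.sqrt (shat ^ 2 + 4 * 0)) / 2)) := by
      exact (hud.add ((((hud.pow 2).add (hp.const_mul 4)).sqrt))).div_const 2
    have h2 : (shat + Real.sqrt (shat ^ 2 + 4 * 0)) / 2 = shat := by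
      rw [mul_zero, add_zero, Real.sqrt_sq hshat.le]; ring
    rw [h2] at h1
    exact h1.congr' (EventuallyEq.symm hueq)
  -- log u → log shat
  have hlogu : Tendsto (fun γ => Real.log (u γ)) l (nhds (Real.log shat)) :=
    huten.log hshat.ne'
  -- 1/log γ → 0
  have hloggamma : Tendsto (fun γ : ℝ => Real.log γ) l atBot := by
    refine Real.tendsto_log_nhdsGT_zero.mono_left ?_
    exact nhdsWithin_mono 0 (fun x hx => hx.1)
  have hinv : Tendsto (fun γ : ℝ => (Real.log γ)⁻¹) l (nhds 0) := by
    have h1 : Tendsto (fun γ : ℝ => -Real.log γ) l atTop :=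
      tendsto_neg_atBot_atTop.comp hloggamma
    have h2 := h1.inv_tendsto_atTop
    have h3 := h2.neg
    simpa [inv_neg] using h3
  -- combine
  have hmain : Tendsto (fun γ => Real.log (u γ) * (Real.log γ)⁻¹ * (-(2 * α)⁻¹) + 1 / α)
      l (nhds (1 / α)) := by
    have := ((hlogu.mul hinv).mul_const (-(2 * α)⁻¹)).add_const (1 / α)
    simpa using this
  refine hmain.congr' ?_
  filter_upwards [hmem] with γ hγ
  have hγ0 : 0 < γ := hγ.1
  have hγ1 : γ < 1 := hγ.2
  have hL : Real.log γ < 0 := Real.log_neg hγ0 hγ1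
  have hLne : Real.log γ ≠ 0 := ne_of_lt hL
  have hαne : α ≠ 0 := hα.ne'
  have hlogu' : Real.log (u γ) = 2 * Real.log γ + 2 * α * ξ γ := by
    rw [hu]
    rw [Real.log_mul (by positivity) (Real.exp_ne_zero _), Real.log_pow, Real.log_exp]
    push_cast; ring
  rw [hlogu', one_div γ, Real.log_inv, div_neg]
  field_simp
  ring
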